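/- arXiv:2406.01305 — 2 statements merged into one kernel-verified Lean document; each statement's English description precedes it below -/
import Mathlib

section
/- Let G be a finite group of order pq, where p and q are distinct primes. Then Γ_CCC(G), Γ_NCC(G) and Γ_SCC(G) are all chordal graphs. -/
/-- The set of conjugacy classes of non-central elements of `G`. -/
def NCClass (G : Type*) [Group G] : Type _ :=
  {c : ConjClasses G // ∃ x : G, ConjClasses.mk x = c ∧ x ∉ Subgroup.center G}

/-- The conjugacy class graph associated to a property `P` of subgroups:
two distinct non-central conjugacy classes are adjacent iff they have
representatives `a`, `b` with `P ⟨a, b⟩`. -/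
def classGraph (G : Type*) [Group G] (P : Subgroup G → Prop) :
    SimpleGraph (NCClass G) where
  Adj c d := c ≠ d ∧ ∃ a b : G, ConjClasses.mk a = c.1 ∧ ConjClasses.mk b = d.1 ∧
    P (Subgroup.closure {a, b})
  symm := by
    constructor
    rintro c d ⟨hne, a, b, ha, hb, hP⟩
    refine ⟨hne.symm, b, a, hb, ha, ?_⟩
    rwa [Set.pair_comm]
  loopless := by constructor; rintro c ⟨hne, -⟩; exact hne rfl

/-- The commuting conjugacy class graph `Γ_CCC(G)`. -/
def cccGraph (G : Type*) [Group G] : SimpleGraph (NCClass G) :=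
  classGraph G (fun H => ∀ x ∈ H, ∀ y ∈ H, x * y = y * x)

/-- The nilpotent conjugacy class graph `Γ_NCC(G)`. -/
def nccGraph (G : Type*) [Group G] : SimpleGraph (NCClass G) :=
  classGraph G (fun H => Group.IsNilpotent H)

/-- The solvable conjugacy class graph `Γ_SCC(G)`. -/
def sccGraph (G : Type*) [Group G] : SimpleGraph (NCClass G) :=
  classGraph G (fun H => IsSolvable H)

/-- A graph contains an induced path `P₄` on four vertices. -/
def HasInducedP4 {V : Type*} (Γ : SimpleGraph V) : Prop :=
  ∃ a b c d : V, a ≠ b ∧ a ≠ c ∧ a ≠ d ∧ b ≠ c ∧ b ≠ d ∧ c ≠ d ∧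
    Γ.Adj a b ∧ Γ.Adj b c ∧ Γ.Adj c d ∧ ¬Γ.Adj a c ∧ ¬Γ.Adj a d ∧ ¬Γ.Adj b d

/-- A graph is a cograph iff it has no induced `P₄`. -/
def IsCograph {V : Type*} (Γ : SimpleGraph V) : Prop := ¬ HasInducedP4 Γ

/-- A graph contains an induced cycle `Cₙ`. -/
def HasInducedCycle {V : Type*} (Γ : SimpleGraph V) (n : ℕ) : Prop :=
  ∃ f : ZMod n → V, Function.Injective f ∧
    ∀ i j : ZMod n, Γ.Adj (f i) (f j) ↔ (j = i + 1 ∨ i = j + 1)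

/-- A graph is chordal iff it has no induced cycle `Cₙ` for `n ≥ 4`. -/
def IsChordal {V : Type*} (Γ : SimpleGraph V) : Prop :=
  ∀ n : ℕ, 4 ≤ n → ¬ HasInducedCycle Γ n

/-- A graph contains an induced `2K₂`. -/
def Has2K2 {V : Type*} (Γ : SimpleGraph V) : Prop :=
  ∃ a b c d : V, a ≠ b ∧ a ≠ c ∧ a ≠ d ∧ b ≠ c ∧ b ≠ d ∧ c ≠ d ∧
    Γ.Adj a b ∧ Γ.Adj c d ∧ ¬Γ.Adj a c ∧ ¬Γ.Adj a d ∧ ¬Γ.Adj b c ∧ ¬Γ.Adj b d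

/-- A graph contains an induced claw `K_{1,3}`: a vertex with three pairwise
non-adjacent neighbours. -/
def HasClaw {V : Type*} (Γ : SimpleGraph V) : Prop :=
  ∃ v a b c : V, a ≠ b ∧ a ≠ c ∧ b ≠ c ∧
    Γ.Adj v a ∧ Γ.Adj v b ∧ Γ.Adj v c ∧ ¬Γ.Adj a b ∧ ¬Γ.Adj a c ∧ ¬Γ.Adj b c

/-- A graph is claw-free iff it has no induced `K_{1,3}`. -/
def IsClawFree {V : Type*} (Γ : SimpleGraph V) : Prop := ¬ HasClaw Γ

/-- A graph is split iff it has no induced `C₄`, `C₅` or `2K₂`. -/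
def IsSplit {V : Type*} (Γ : SimpleGraph V) : Prop :=
  ¬ HasInducedCycle Γ 4 ∧ ¬ HasInducedCycle Γ 5 ∧ ¬ Has2K2 Γ

/-- A graph is threshold iff it has no induced `P₄`, `C₄`, `C₅` or `2K₂`. -/
def IsThreshold {V : Type*} (Γ : SimpleGraph V) : Prop :=
  ¬ HasInducedP4 Γ ∧ ¬ HasInducedCycle Γ 4 ∧ ¬ HasInducedCycle Γ 5 ∧ ¬ Has2K2 Γ

/-- An EPPO group: every non-identity element has prime power order. -/
def IsEPPO (G : Type*) [Group G] : Prop :=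
  ∀ g : G, g ≠ 1 → IsPrimePow (orderOf g)
/-!
If `x` is a non-central element of a group of order `pq`, its centralizer is a proper subgroup
containing `⟨x⟩`, hence of prime order, hence equal to `⟨x⟩`. So commuting is transitive through
non-central elements. A group of squarefree order is a Z-group: it is solvable, so `Γ_SCC` is
complete, and its nilpotent subgroups are cyclic, so in both `Γ_NCC` and `Γ_CCC` two classes are
adjacent iff they have commuting representatives. Conjugating one witnessing pair makes this
relation transitive on classes, and a graph with transitive adjacency is a disjoint union of
cliques, hence chordal.
-/

open Subgroup

theorem isChordal_of_transitive {V : Type*} {Γ : SimpleGraph V}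
    (h : ∀ a b c, Γ.Adj a b → Γ.Adj b c → a ≠ c → Γ.Adj a c) : IsChordal Γ := by
  rintro n hn ⟨f, hf, hadj⟩
  have cast_ne_zero (k : ℕ) (hk : 0 < k) (hkn : k < n) : (k : ZMod n) ≠ 0 := fun h0 =>
    absurd (Nat.le_of_dvd hk ((ZMod.natCast_eq_zero_iff k n).1 h0)) (by omega)
  have h01 : Γ.Adj (f 0) (f 1) := (hadj 0 1).2 (.inl (zero_add 1).symm)
  have h12 : Γ.Adj (f 1) (f 2) := (hadj 1 2).2 (.inl one_add_one_eq_two.symm)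
  have h02 : f 0 ≠ f 2 := fun h0 =>
    cast_ne_zero 2 (by omega) (by omega) (by exact_mod_cast (hf h0).symm)
  rcases (hadj 0 2).1 (h _ _ _ h01 h12 h02) with h2 | h0
  · exact cast_ne_zero 1 one_pos (by omega) (by push_cast; linear_combination h2)
  · exact cast_ne_zero 3 (by omega) (by omega) (by push_cast; linear_combination -h0)

theorem Nat.prime_of_dvd_prime_mul_prime {p q d : ℕ} (hp : p.Prime) (hq : q.Prime)
    (hd : d ∣ p * q) (h1 : d ≠ 1) (hpq : d ≠ p * q) : d.Prime := by
  obtain ⟨k, l, hk, hl, rfl⟩ := Nat.dvd_mul.1 hd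
  rcases (Nat.dvd_prime hp).1 hk with rfl | rfl <;> rcases (Nat.dvd_prime hq).1 hl with rfl | rfl
  all_goals simp_all

section Commute

variable {G : Type*} [Group G]

theorem pairwise_mul_comm_of_commute {a b : G} (hab : Commute a b) :
    ∀ x ∈ ({a, b} : Set G), ∀ y ∈ ({a, b} : Set G), x * y = y * x := by
  rintro x (rfl | rfl) y (rfl | rfl)
  exacts [rfl, hab.eq, hab.symm.eq, rfl]

theorem forall_mul_comm_closure_pair_iff {a b : G} :
    (∀ x ∈ closure {a, b}, ∀ y ∈ closure {a, b}, x * y = y * x) ↔ Commute a b := by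
  refine ⟨fun h => h a (subset_closure (by simp)) b (subset_closure (by simp)), fun hab => ?_⟩
  have := isMulCommutative_closure (pairwise_mul_comm_of_commute hab)
  exact fun x hx y hy => congrArg Subtype.val (mul_comm' (⟨x, hx⟩ : closure {a, b}) ⟨y, hy⟩)

/-- A nilpotent finite Z-group is cyclic, whence the forward direction. -/
theorem isNilpotent_closure_pair_iff [Finite G] [IsZGroup G] {a b : G} :
    Group.IsNilpotent (closure {a, b}) ↔ Commute a b := by
  refine ⟨fun _ => ?_, fun hab => ?_⟩
  · exact congrArg Subtype.val (IsCyclic.commGroup.mul_comm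
      (⟨a, subset_closure (by simp)⟩ : closure {a, b}) ⟨b, subset_closure (by simp)⟩)
  · exact ⟨1, upperCentralSeries_one_eq_top_iff.2
      (isMulCommutative_closure (pairwise_mul_comm_of_commute hab))⟩

variable [Finite G] {p q : ℕ}

theorem centralizer_singleton_eq_zpowers (hp : p.Prime) (hq : q.Prime)
    (hcard : Nat.card G = p * q) {x : G} (hx : x ∉ center G) : centralizer {x} = zpowers x := by
  have hle : zpowers x ≤ centralizer {x} := zpowers_le.2 (mem_centralizer_singleton_iff.2 rfl)
  have hx1 : Nat.card (zpowers x) ≠ 1 := by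
    rw [Nat.card_zpowers, Ne, orderOf_eq_one_iff]
    rintro rfl
    exact hx (one_mem _)
  have hprime : (Nat.card (centralizer {x})).Prime := by
    refine Nat.prime_of_dvd_prime_mul_prime hp hq (hcard ▸ card_subgroup_dvd_card _) ?_ ?_
    · exact fun h => hx1 (Nat.eq_one_of_dvd_one (h ▸ card_dvd_of_le hle))
    · rw [← hcard, Ne, card_eq_iff_eq_top, centralizer_eq_top_iff_subset]
      exact fun h => hx (h rfl)
  refine (eq_of_le_of_card_ge hle ?_).symm
  rcases (Nat.dvd_prime hprime).1 (card_dvd_of_le hle) with h | h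
  · exact absurd h hx1
  · exact h.ge

theorem commute_trans_of_notMem_center (hp : p.Prime) (hq : q.Prime)
    (hcard : Nat.card G = p * q) {a b c : G} (hb : b ∉ center G) (hab : Commute a b)
    (hbc : Commute b c) : Commute a c := by
  have hzb : centralizer {b} = zpowers b := centralizer_singleton_eq_zpowers hp hq hcard hb
  obtain ⟨m, rfl⟩ := mem_zpowers_iff.1 (hzb ▸ mem_centralizer_singleton_iff.2 hab.eq)
  obtain ⟨n, rfl⟩ := mem_zpowers_iff.1 (hzb ▸ mem_centralizer_singleton_iff.2 hbc.symm.eq)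
  exact Commute.zpow_zpow_self b m n

end Commute

section classGraph

variable {G : Type*} [Group G] {P : Subgroup G → Prop}

theorem NCClass.notMem_center_of_mk_eq {c : NCClass G} {a : G}
    (ha : ConjClasses.mk a = c.1) : a ∉ center G := by
  obtain ⟨x, hx, hxZ⟩ := c.2
  intro haZ
  have hax : IsConj a x := ConjClasses.mk_eq_mk_iff_isConj.1 (ha.trans hx.symm)
  exact hxZ (hax.eq_of_left_mem_center haZ ▸ haZ)

theorem classGraph_adj_iff_ne (hP : ∀ H, P H) {c d : NCClass G} :
    (classGraph G P).Adj c d ↔ c ≠ d := by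
  refine ⟨And.left, fun hne => ⟨hne, ?_⟩⟩
  obtain ⟨a, ha, -⟩ := c.2
  obtain ⟨b, hb, -⟩ := d.2
  exact ⟨a, b, ha, hb, hP _⟩

theorem classGraph_adj_trans_of_commute (hP : ∀ a b : G, P (closure {a, b}) ↔ Commute a b)
    (htrans : ∀ a b c : G, b ∉ center G → Commute a b → Commute b c → Commute a c)
    {c₁ c₂ c₃ : NCClass G} (h₁₂ : (classGraph G P).Adj c₁ c₂)
    (h₂₃ : (classGraph G P).Adj c₂ c₃) (hne : c₁ ≠ c₃) : (classGraph G P).Adj c₁ c₃ := by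
  obtain ⟨-, a, b, ha, hb, hab⟩ := h₁₂
  obtain ⟨-, b', c, hb', hc, hbc⟩ := h₂₃
  obtain ⟨g, rfl⟩ := isConj_iff.1 (ConjClasses.mk_eq_mk_iff_isConj.1 (hb.trans hb'.symm))
  refine ⟨hne, g * a * g⁻¹, c, ha ▸ ConjClasses.mk_eq_mk_iff_isConj.2 ?_, hc, (hP _ _).2 ?_⟩
  · exact isConj_iff.2 ⟨g⁻¹, by group⟩
  · exact htrans _ _ _ (NCClass.notMem_center_of_mk_eq hb')
      (((hP a b).1 hab).map (MulAut.conj g)) ((hP _ _).1 hbc)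

end classGraph

theorem pq_group_chordal (G : Type*) [Group G] [Finite G] (p q : ℕ)
    (hp : p.Prime) (hq : q.Prime) (hpq : p ≠ q) (hcard : Nat.card G = p * q) :
    IsChordal (cccGraph G) ∧ IsChordal (nccGraph G) ∧ IsChordal (sccGraph G) := by
  have : IsZGroup G := .of_squarefree <| hcard ▸ Nat.squarefree_mul_iff.2
    ⟨(Nat.coprime_primes hp hq).2 hpq, hp.prime.squarefree, hq.prime.squarefree⟩
  have htrans (a b c : G) : b ∉ center G → Commute a b → Commute b c → Commute a c :=
    commute_trans_of_notMem_center hp hq hcard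
  refine ⟨isChordal_of_transitive ?_, isChordal_of_transitive ?_, isChordal_of_transitive ?_⟩
  · exact fun _ _ _ =>
      classGraph_adj_trans_of_commute (fun _ _ => forall_mul_comm_closure_pair_iff) htrans
  · exact fun _ _ _ =>
      classGraph_adj_trans_of_commute (fun _ _ => isNilpotent_closure_pair_iff) htrans
  · exact fun _ _ _ _ _ h =>
      (classGraph_adj_iff_ne (P := fun H => Group.IsSolvable H) fun _ => inferInstance).2 h
end

section
/- For n ≥ 1, the graph Γ_CCC(Sym(n)) is a split graph if and only if n ≤ 4, and it is a threshold graph if and only if n ≤ 4. -/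
/-!
For `n ≤ 4` every edge of `Γ_CCC(Sym(n))` contains the class of the double transpositions, and
for `n ≤ 3` there are no edges at all: any two commuting non-trivial permutations are then
conjugate.  So no two edges are vertex-disjoint, whereas each of `P₄`, `C₄`, `C₅`, `2K₂` has two
disjoint edges.

For `n ≥ 5` there is an induced `2K₂`.  When `n ≥ 6` its edges are `{c, c²}`, for a cycle `c`
of even length `n` or `n - 1`, and `{(a b), δ}`, for an `(n - 2)`-cycle `δ` fixing `a` and `b`.
Anything commuting with `(a b)` or with `δ` permutes `{a, b}`, so its square fixes both `a` and
`b`; but `c²` and `c⁴` fix at most one point, so no conjugate of `c` or `c²` commutes with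
`(a b)` or `δ`.  For `n = 5` (no such `c` exists) the edges `{(0 1 2 3), (0 2)(1 3)}` and
`{(0 1 2), (0 1 2)(3 4)}` are checked directly.
-/

open Equiv Function Set

section Graph

variable {V : Type*} {Γ : SimpleGraph V}

theorem IsThreshold.isSplit (h : IsThreshold Γ) : IsSplit Γ :=
  h.2

theorem not_hasInducedCycle_of_adj_meet
    (h : ∀ a b c d, Γ.Adj a b → Γ.Adj c d → a = c ∨ a = d ∨ b = c ∨ b = d) {n : ℕ}
    (h02 : (0 : ZMod n) ≠ 2) (h03 : (0 : ZMod n) ≠ 3) (h12 : (1 : ZMod n) ≠ 2)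
    (h13 : (1 : ZMod n) ≠ 3) : ¬HasInducedCycle Γ n := by
  rintro ⟨f, hf, hadj⟩
  have h01 := (hadj 0 1).2 (Or.inl (zero_add 1).symm)
  have h23 := (hadj 2 3).2 (Or.inl (by norm_num))
  simpa [hf.eq_iff, h02, h03, h12, h13] using h _ _ _ _ h01 h23

theorem isThreshold_of_adj_meet
    (h : ∀ a b c d, Γ.Adj a b → Γ.Adj c d → a = c ∨ a = d ∨ b = c ∨ b = d) :
    IsThreshold Γ := by
  refine ⟨?_, not_hasInducedCycle_of_adj_meet h (by decide) (by decide) (by decide) (by decide),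
    not_hasInducedCycle_of_adj_meet h (by decide) (by decide) (by decide) (by decide), ?_⟩
  · rintro ⟨a, b, c, d, -, hac, had, hbc, hbd, -, hab, -, hcd, -⟩
    grind
  · rintro ⟨a, b, c, d, -, hac, had, hbc, hbd, -, hab, hcd, -⟩
    grind

end Graph

section ConjClassGraph

variable {G : Type*} [Group G]

theorem cccGraph_adj_iff {c d : NCClass G} :
    (cccGraph G).Adj c d ↔ c ≠ d ∧ ∃ a b : G, ConjClasses.mk a = c.1 ∧ ConjClasses.mk b = d.1 ∧
      Commute a b := by
  refine and_congr_right fun _ => exists₂_congr fun a b =>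
    and_congr_right' <| and_congr_right' ⟨fun h => ?_, fun h => ?_⟩
  · exact h a (Subgroup.subset_closure (mem_insert a _)) b
      (Subgroup.subset_closure (mem_insert_of_mem a rfl))
  · have : IsMulCommutative (Subgroup.closure {a, b}) := Subgroup.isMulCommutative_closure <| by
      rintro x (rfl | rfl) y (rfl | rfl) <;> first | rfl | exact h | exact h.symm
    intro x hx y hy
    exact congrArg Subtype.val (mul_comm' (⟨x, hx⟩ : Subgroup.closure {a, b}) ⟨y, hy⟩)

def NCClass.mk (a : G) (ha : a ∉ Subgroup.center G) : NCClass G :=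
  ⟨ConjClasses.mk a, a, rfl, ha⟩

theorem NCClass.mk_ne_mk {a b : G} {ha : a ∉ Subgroup.center G} {hb : b ∉ Subgroup.center G}
    (h : ¬IsConj a b) : NCClass.mk a ha ≠ NCClass.mk b hb :=
  fun hab => h (ConjClasses.mk_eq_mk_iff_isConj.1 (congrArg Subtype.val hab))

theorem NCClass.ne_one_of_mk_eq (c : NCClass G) {a : G} (ha : ConjClasses.mk a = c.1) :
    a ≠ 1 := by
  rintro rfl
  obtain ⟨x, hx, hxc⟩ := c.2
  rw [← ha, ConjClasses.mk_eq_mk_iff_isConj, isConj_one_left] at hx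
  exact hxc (hx ▸ Subgroup.one_mem _)

theorem notMem_center_of_not_commute {a b : G} (h : ¬Commute a b) :
    a ∉ Subgroup.center G :=
  fun ha => h (Subgroup.mem_center_iff.1 ha b).symm

theorem not_isConj_of_forall_not_commute {a b : G} (h : ∀ g : G, ¬Commute (g * a * g⁻¹) b) :
    ¬IsConj a b := by
  intro hab
  obtain ⟨g, rfl⟩ := isConj_iff.1 hab
  exact h g (Commute.refl _)

theorem IsConj.orderOf_eq {a b : G} (h : IsConj a b) : orderOf a = orderOf b :=
  let ⟨_, hc⟩ := h
  hc.orderOf_eq _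

theorem IsConj.pow_eq_one_iff {a b : G} (h : IsConj a b) {k : ℕ} : a ^ k = 1 ↔ b ^ k = 1 := by
  rw [← orderOf_dvd_iff_pow_eq_one, ← orderOf_dvd_iff_pow_eq_one, h.orderOf_eq]

theorem cccGraph_adj_mk {a b : G} {ha : a ∉ Subgroup.center G} {hb : b ∉ Subgroup.center G}
    (hab : Commute a b) (hne : ¬IsConj a b) :
    (cccGraph G).Adj (NCClass.mk a ha) (NCClass.mk b hb) :=
  cccGraph_adj_iff.2 ⟨NCClass.mk_ne_mk hne, a, b, rfl, rfl, hab⟩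

theorem cccGraph_not_adj {c d : NCClass G} {a b : G} (ha : ConjClasses.mk a = c.1)
    (hb : ConjClasses.mk b = d.1) (h : ∀ g : G, ¬Commute (g * a * g⁻¹) b) :
    ¬(cccGraph G).Adj c d := by
  intro hcd
  obtain ⟨-, x, y, hx, hy, hxy⟩ := cccGraph_adj_iff.1 hcd
  obtain ⟨k, rfl⟩ := isConj_iff.1 (ConjClasses.mk_eq_mk_iff_isConj.1 (ha.trans hx.symm))
  obtain ⟨l, rfl⟩ := isConj_iff.1 (ConjClasses.mk_eq_mk_iff_isConj.1 (hb.trans hy.symm))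
  apply h (l⁻¹ * k)
  simpa [mul_assoc] using hxy.conj l⁻¹

theorem has2K2_cccGraph {r₁ r₂ s₁ s₂ : G} (hr : Commute r₁ r₂) (hs : Commute s₁ s₂)
    (hr' : ¬IsConj r₁ r₂) (hs' : ¬IsConj s₁ s₂)
    (hrs : ∀ r ∈ ({r₁, r₂} : Set G), ∀ s ∈ ({s₁, s₂} : Set G), ∀ g : G,
      ¬Commute (g * r * g⁻¹) s) :
    Has2K2 (cccGraph G) := by
  have hrs₁ : ∀ r ∈ ({r₁, r₂} : Set G), ∀ s ∈ ({s₁, s₂} : Set G), ¬Commute r s :=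
    fun r hr s hs h => hrs r hr s hs 1 (by simpa using h)
  have hr₁ := notMem_center_of_not_commute (hrs₁ r₁ (by simp) s₁ (by simp))
  have hr₂ := notMem_center_of_not_commute (hrs₁ r₂ (by simp) s₁ (by simp))
  have hs₁ := notMem_center_of_not_commute fun h => hrs₁ r₁ (by simp) s₁ (by simp) h.symm
  have hs₂ := notMem_center_of_not_commute fun h => hrs₁ r₁ (by simp) s₂ (by simp) h.symm
  refine ⟨NCClass.mk r₁ hr₁, NCClass.mk r₂ hr₂, NCClass.mk s₁ hs₁, NCClass.mk s₂ hs₂,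
    NCClass.mk_ne_mk hr', ?_, ?_, ?_, ?_, NCClass.mk_ne_mk hs', cccGraph_adj_mk hr hr',
    cccGraph_adj_mk hs hs', ?_, ?_, ?_, ?_⟩
  all_goals first
    | exact NCClass.mk_ne_mk (not_isConj_of_forall_not_commute (hrs _ (by simp) _ (by simp)))
    | exact cccGraph_not_adj rfl rfl (hrs _ (by simp) _ (by simp))

theorem cccGraph_adj_meet_of_isConj (z : G)
    (hz : ∀ a b : G, Commute a b → a ≠ 1 → b ≠ 1 → ¬IsConj a b → IsConj a z ∨ IsConj b z) :
    ∀ c d c' d', (cccGraph G).Adj c d → (cccGraph G).Adj c' d' →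
      c = c' ∨ c = d' ∨ d = c' ∨ d = d' := by
  have hend : ∀ c d, (cccGraph G).Adj c d → c.1 = ConjClasses.mk z ∨ d.1 = ConjClasses.mk z := by
    intro c d hcd
    obtain ⟨hne, a, b, ha, hb, hab⟩ := cccGraph_adj_iff.1 hcd
    have hconj : ¬IsConj a b := fun h =>
      hne (Subtype.ext (ha.symm.trans ((ConjClasses.mk_eq_mk_iff_isConj.2 h).trans hb)))
    rw [← ha, ← hb, ConjClasses.mk_eq_mk_iff_isConj, ConjClasses.mk_eq_mk_iff_isConj]
    exact hz a b hab (c.ne_one_of_mk_eq ha) (d.ne_one_of_mk_eq hb) hconj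
  intro c d c' d' h h'
  rcases hend c d h with h₁ | h₁ <;> rcases hend c' d' h' with h₂ | h₂ <;>
    simp [Subtype.ext (h₁.trans h₂.symm)]

end ConjClassGraph

namespace Equiv.Perm

variable {α : Type*}

theorem isFixedPt_apply_iff_of_commute {τ σ : Perm α} (h : Commute τ σ) {x : α} :
    IsFixedPt σ (τ x) ↔ IsFixedPt σ x := by
  rw [IsFixedPt, IsFixedPt, ← Perm.mul_apply, ← h.eq, Perm.mul_apply, τ.injective.eq_iff]

theorem sq_apply_eq_of_mapsTo_pair {π : Perm α} {a b : α} (h : MapsTo π {a, b} {a, b}) :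
    (π ^ 2) a = a := by
  rw [sq, Perm.mul_apply]
  rcases h (mem_insert a _) with ha | ha
  · rw [ha, ha]
  rcases h (mem_insert_of_mem a rfl) with hb | hb
  · rw [ha, hb]
  · rw [ha, hb, π.injective (ha.trans hb.symm)]

theorem mapsTo_pair_of_commute_of_fixedPoints_eq {τ σ : Perm α} {a b : α} (h : Commute τ σ)
    (hσ : fixedPoints σ = {a, b}) : MapsTo τ {a, b} {a, b} :=
  hσ ▸ fun _ hx => (isFixedPt_apply_iff_of_commute h).2 hx

theorem mapsTo_pair_of_commute_swap [DecidableEq α] {τ : Perm α} {a b : α} (hab : a ≠ b)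
    (h : Commute τ (swap a b)) : MapsTo τ {a, b} {a, b} := by
  have hmoved : ∀ x, x ∈ ({a, b} : Set α) ↔ ¬IsFixedPt (swap a b) x := fun x => by
    simp [IsFixedPt, swap_apply_ne_self_iff, hab]
  intro x hx
  rw [hmoved] at hx ⊢
  rwa [isFixedPt_apply_iff_of_commute h]

theorem not_commute_conj_of_mapsTo_pair {π σ : Perm α} {a b : α} (hab : a ≠ b)
    (hπ : (fixedPoints ⇑(π ^ 2)).Subsingleton)
    (hσ : ∀ τ : Perm α, Commute τ σ → MapsTo τ {a, b} {a, b}) (g : Perm α) :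
    ¬Commute (g * π * g⁻¹) σ := by
  intro h
  have ha := sq_apply_eq_of_mapsTo_pair (hσ _ h)
  have hb := sq_apply_eq_of_mapsTo_pair (pair_comm a b ▸ hσ _ h)
  rw [conj_pow] at ha hb
  refine hab (g⁻¹.injective (hπ ?_ ?_))
  · simpa [IsFixedPt] using congrArg (⇑g⁻¹) ha
  · simpa [IsFixedPt] using congrArg (⇑g⁻¹) hb

theorem IsCycle.fixedPoints_pow_subset [Finite α] {c : Perm α} (hc : c.IsCycle) {k : ℕ}
    (hk : ¬orderOf c ∣ k) : fixedPoints ⇑(c ^ k) ⊆ fixedPoints c := by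
  intro x hx
  by_contra hcx
  exact hk (orderOf_dvd_of_pow_eq_one ((hc.pow_eq_one_iff' hcx).2 hx))

theorem has2K2_cccGraph_of_isCycle [Finite α] [DecidableEq α] {a b : α} (hab : a ≠ b)
    {δ c : Perm α} (hδ : fixedPoints δ = {a, b}) (hδ2 : orderOf δ ≠ 2) (hc : c.IsCycle)
    (hc_even : Even (orderOf c)) (hc6 : 6 ≤ orderOf c) (hcfix : (fixedPoints c).Subsingleton) :
    Has2K2 (cccGraph (Perm α)) := by
  have hδa : δ a = a := (hδ ▸ mem_insert a _ : a ∈ fixedPoints δ)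
  have hδb : δ b = b := (hδ ▸ mem_insert_of_mem a rfl : b ∈ fixedPoints δ)
  have hc_sq : (fixedPoints ⇑(c ^ 2)).Subsingleton := hcfix.anti <|
    hc.fixedPoints_pow_subset fun h => by have := Nat.le_of_dvd two_pos h; omega
  have hc_sq_sq : (fixedPoints ⇑((c ^ 2) ^ 2)).Subsingleton := hcfix.anti <| by
    rw [← pow_mul]
    exact hc.fixedPoints_pow_subset fun h => by have := Nat.le_of_dvd (by norm_num) h; omega
  refine has2K2_cccGraph (Commute.self_pow c 2) (r₁ := c) (s₁ := swap a b) (s₂ := δ)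
    (by rw [Commute, SemiconjBy, mul_swap_eq_swap_mul, hδa, hδb]) ?_ ?_ ?_
  · refine fun h => absurd h.orderOf_eq ?_
    rw [orderOf_pow' c two_ne_zero, Nat.gcd_eq_right (even_iff_two_dvd.1 hc_even)]
    omega
  · exact fun h => hδ2 (h.orderOf_eq ▸ IsSwap.orderOf ⟨a, b, hab, rfl⟩)
  · rintro r hr s hs g
    refine not_commute_conj_of_mapsTo_pair hab ?_ ?_ g
    · rcases hr with rfl | rfl
      · exact hc_sq
      · exact hc_sq_sq
    · rcases hs with rfl | rfl
      · exact fun τ h => mapsTo_pair_of_commute_swap hab h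
      · exact fun τ h => mapsTo_pair_of_commute_of_fixedPoints_eq h hδ

end Equiv.Perm

namespace Fin

variable {n : ℕ} [NeZero n]

theorem fixedPoints_cycleRange {i : Fin n} (hi : i ≠ 0) :
    fixedPoints ⇑(cycleRange i) = {x | i < x} := by
  ext x
  simp only [mem_fixedPoints, IsFixedPt, mem_ofPred_eq]
  rcases lt_trichotomy x i with hx | rfl | hx
  · simp [Fin.ext_iff, coe_cycleRange_of_lt hx, hx.not_gt]
  · simp [cycleRange_self, Ne.symm hi]
  · simp [cycleRange_of_gt hx, hx]

theorem orderOf_cycleRange {i : Fin n} (hi : i ≠ 0) : orderOf (cycleRange i) = i + 1 := by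
  rw [← Equiv.Perm.lcm_cycleType, cycleType_cycleRange hi, Multiset.lcm_singleton, normalize_eq]

end Fin

theorem has2K2_cccGraph_perm_fin_of_six_le {n : ℕ} (hn : 6 ≤ n) :
    Has2K2 (cccGraph (Perm (Fin n))) := by
  have : NeZero n := ⟨by omega⟩
  have hδ0 : (⟨n - 3, by omega⟩ : Fin n) ≠ 0 := by
    simp only [ne_eq, Fin.ext_iff, Fin.coe_ofNat_eq_mod, Nat.zero_mod]
    omega
  have hc0 : (⟨2 * (n / 2) - 1, by omega⟩ : Fin n) ≠ 0 := by
    simp only [ne_eq, Fin.ext_iff, Fin.coe_ofNat_eq_mod, Nat.zero_mod]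
    omega
  refine Perm.has2K2_cccGraph_of_isCycle (a := ⟨n - 2, by omega⟩) (b := ⟨n - 1, by omega⟩)
    (by simp only [ne_eq, Fin.ext_iff]; omega) (δ := Fin.cycleRange ⟨n - 3, by omega⟩)
    (c := Fin.cycleRange ⟨2 * (n / 2) - 1, by omega⟩) ?_ ?_ (Fin.isCycle_cycleRange hc0) ?_ ?_ ?_
  · rw [Fin.fixedPoints_cycleRange hδ0]
    ext x
    simp only [Fin.lt_def, mem_ofPred_eq, mem_insert_iff, Fin.ext_iff, mem_singleton_iff]
    omega
  · rw [Fin.orderOf_cycleRange hδ0, Fin.val_mk]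
    omega
  · rw [Fin.orderOf_cycleRange hc0, Fin.val_mk]
    exact ⟨n / 2, by omega⟩
  · rw [Fin.orderOf_cycleRange hc0, Fin.val_mk]
    omega
  · rw [Fin.fixedPoints_cycleRange hc0]
    intro x hx y hy
    simp only [Fin.lt_def, mem_ofPred_eq, Fin.ext_iff] at hx hy ⊢
    omega

set_option maxRecDepth 10000 in
theorem has2K2_cccGraph_perm_fin_five : Has2K2 (cccGraph (Perm (Fin 5))) := by
  refine has2K2_cccGraph (r₁ := swap 0 1 * swap 1 2 * swap 2 3) (s₁ := swap 0 1 * swap 1 2)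
    (s₂ := swap 0 1 * swap 1 2 * swap 3 4) (Commute.self_pow _ 2) ?_ ?_ ?_ ?_
  · simp only [Commute, SemiconjBy]
    decide
  · exact fun h => absurd ((h.pow_eq_one_iff (k := 2)).2 (by decide)) (by decide)
  · exact fun h => absurd ((h.pow_eq_one_iff (k := 3)).1 (by decide)) (by decide)
  · simp only [mem_insert_iff, mem_singleton_iff, forall_eq_or_imp, forall_eq, Commute,
      SemiconjBy]
    exact ⟨⟨by decide, by decide⟩, by decide, by decide⟩

theorem exists_isConj_of_commute_perm_fin_le_four {n : ℕ} (hn : n ≤ 4) :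
    ∃ z : Perm (Fin n), ∀ a b : Perm (Fin n),
      Commute a b → a ≠ 1 → b ≠ 1 → ¬IsConj a b → IsConj a z ∨ IsConj b z := by
  simp only [Commute, SemiconjBy]
  interval_cases n
  iterate 4 exact ⟨1, by decide⟩
  exact ⟨swap 0 1 * swap 2 3, by decide⟩

theorem isThreshold_cccGraph_perm_fin_of_le_four {n : ℕ} (hn : n ≤ 4) :
    IsThreshold (cccGraph (Perm (Fin n))) :=
  let ⟨z, hz⟩ := exists_isConj_of_commute_perm_fin_le_four hn
  isThreshold_of_adj_meet (cccGraph_adj_meet_of_isConj z hz)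

theorem has2K2_cccGraph_perm_fin_of_five_le {n : ℕ} (hn : 5 ≤ n) :
    Has2K2 (cccGraph (Perm (Fin n))) := by
  obtain rfl | hn := hn.eq_or_lt
  · exact has2K2_cccGraph_perm_fin_five
  · exact has2K2_cccGraph_perm_fin_of_six_le hn

theorem ccc_sym_split_threshold_iff_general (n : ℕ) :
    (IsSplit (cccGraph (Equiv.Perm (Fin n))) ↔ n ≤ 4) ∧
    (IsThreshold (cccGraph (Equiv.Perm (Fin n))) ↔ n ≤ 4) := by
  rcases le_or_gt n 4 with hn | hn
  · have h := isThreshold_cccGraph_perm_fin_of_le_four hn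
    exact ⟨iff_of_true h.isSplit hn, iff_of_true h hn⟩
  · have h := has2K2_cccGraph_perm_fin_of_five_le hn
    exact ⟨iff_of_false (fun hs => hs.2.2 h) hn.not_ge,
      iff_of_false (fun ht => ht.2.2.2 h) hn.not_ge⟩

theorem ccc_sym_split_threshold_iff (n : ℕ) (hn : 1 ≤ n) :
    (IsSplit (cccGraph (Equiv.Perm (Fin n))) ↔ n ≤ 4) ∧
    (IsThreshold (cccGraph (Equiv.Perm (Fin n))) ↔ n ≤ 4) :=
  ccc_sym_split_threshold_iff_general n
end
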